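/- Threshold/phase-transition for convergence in expectation: suppose L_att L_rep = L_rep L_att, G_att has a spanning tree (so ρ((I − 𝟏𝟏^T/n)(I − (α/n)L_att)) < 1 for fixed α ∈ (0,1]), and L_rep ≠ 0. Define f(β) = ρ((I − 𝟏𝟁^T/n)(I − (α/n)L_att + (β/n)L_rep)). Then the set {β ≥ 0 : f(β) > 1} is nonempty and upward closed (if f(β₁) > 1 and β₂ > β₁ then f(β₂) > 1); hence β⋆ = inf{β ≥ 0 : f(β) > 1} is finite and: f(β) < 1 for 0 ≤ β < β⋆ while f(β) > 1 for β > β⋆. -/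

import Mathlib

/-!
Write `M β = (I − J)(I − (α/n)L_att + (β/n)L_rep) = P + β Q` with `J = 𝟏𝟏ᵀ/n`. The update matrices
have unit row sums and `L_rep` has zero row sums, so they preserve the range of the projection `J`;
together with `L_att L_rep = L_rep L_att` this makes `P` and `Q` commute. For commuting matrices the
spectrum of a sum lies in the sum of the spectra (a common eigenvector), so the spectral radius is
subadditive along the pencil and `f(β) = ρ(P + β Q)` is convex. A nonzero Laplacian has positive
trace, so `tr Q = tr L_rep / n > 0` and the bound `|tr M| ≤ n ρ(M)` makes `f` unbounded. Finally, a
convex function on `[0, ∞)` is strictly increasing on `[x, ∞)` as soon as `f x > f 0`; with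
`f 0 < 1` this yields the threshold `β⋆`.
-/

open Matrix

/-- The spectral radius of a real matrix: the supremum of the absolute values of its
complex eigenvalues. -/
noncomputable def specRad {n : ℕ} (A : Matrix (Fin n) (Fin n) ℝ) : ℝ :=
  sSup {r : ℝ | ∃ μ ∈ spectrum ℂ (A.map Complex.ofReal), r = ‖μ‖}

open Set Pointwise

namespace Module.End

variable {K V : Type*} [Field K] [IsAlgClosed K] [AddCommGroup V] [Module K V]
  [FiniteDimensional K V]

/- An eigenspace of `f + g` is `f`-invariant, so it contains an eigenvector of `f`, which is then
an eigenvector of `g` as well. -/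
theorem spectrum_add_subset_of_commute {f g : End K V} (h : Commute f g) :
    spectrum K (f + g) ⊆ spectrum K f + spectrum K g := by
  intro μ hμ
  rw [← hasEigenvalue_iff_mem_spectrum] at hμ
  have hmaps : MapsTo f ((f + g).eigenspace μ) ((f + g).eigenspace μ) :=
    mapsTo_genEigenspace_of_comm ((Commute.refl f).add_left h.symm) μ 1
  have : Nontrivial ((f + g).eigenspace μ) := Submodule.nontrivial_iff_ne_bot.mpr hμ
  obtain ⟨a, ha⟩ := exists_eigenvalue (f.restrict hmaps)
  obtain ⟨⟨w, hw⟩, hwa, hw0⟩ := ha.exists_hasEigenvector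
  have hfw : f w = a • w := congrArg Subtype.val (mem_eigenspace_iff.mp hwa)
  have hgw : g w = (μ - a) • w := by
    rw [sub_smul, ← hfw, ← mem_eigenspace_iff.mp hw, LinearMap.add_apply, add_sub_cancel_left]
  have hw0' : w ≠ 0 := by simpa using hw0
  have hmem : ∀ (φ : End K V) (c : K), φ w = c • w → c ∈ spectrum K φ := fun φ c hφ =>
    hasEigenvalue_iff_mem_spectrum.mp
      (hasEigenvalue_of_hasEigenvector ⟨mem_eigenspace_iff.mpr hφ, hw0'⟩)
  exact ⟨a, hmem f a hfw, μ - a, hmem g (μ - a) hgw, add_sub_cancel a μ⟩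

end Module.End

theorem Matrix.spectrum_add_subset_of_commute {K ι : Type*} [Field K] [IsAlgClosed K]
    [Fintype ι] [DecidableEq ι] {A B : Matrix ι ι K} (h : Commute A B) :
    spectrum K (A + B) ⊆ spectrum K A + spectrum K B := by
  simpa only [← AlgEquiv.spectrum_eq (toLinAlgEquiv' (R := K) (n := ι)), map_add] using
    Module.End.spectrum_add_subset_of_commute (h.map toLinAlgEquiv')

section SpecRad

variable {n : ℕ} {A B : Matrix (Fin n) (Fin n) ℝ}

lemma specRad_eq_sSup_image (A : Matrix (Fin n) (Fin n) ℝ) :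
    specRad A = sSup ((‖·‖) '' spectrum ℂ (A.map Complex.ofReal)) := by
  simp only [specRad, image, eq_comm]

lemma norm_le_specRad {μ : ℂ} (hμ : μ ∈ spectrum ℂ (A.map Complex.ofReal)) :
    ‖μ‖ ≤ specRad A := by
  rw [specRad_eq_sSup_image]
  exact le_csSup ((Matrix.finite_spectrum _).image _).bddAbove (mem_image_of_mem _ hμ)

lemma specRad_nonneg (A : Matrix (Fin n) (Fin n) ℝ) : 0 ≤ specRad A :=
  Real.sSup_nonneg (by rintro _ ⟨μ, -, rfl⟩; exact norm_nonneg μ)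

lemma specRad_le {r : ℝ} (hr : 0 ≤ r)
    (h : ∀ μ ∈ spectrum ℂ (A.map Complex.ofReal), ‖μ‖ ≤ r) : specRad A ≤ r :=
  Real.sSup_le (by rintro _ ⟨μ, hμ, rfl⟩; exact h μ hμ) hr

lemma abs_trace_le_mul_specRad (A : Matrix (Fin n) (Fin n) ℝ) :
    |A.trace| ≤ n * specRad A := by
  set p := (A.map Complex.ofReal).charpoly
  have hroots : ∀ μ ∈ p.roots, ‖μ‖ ≤ specRad A := fun μ hμ =>
    norm_le_specRad (mem_spectrum_iff_isRoot_charpoly.mpr (Polynomial.isRoot_of_mem_roots hμ))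
  have hcard : Multiset.card p.roots ≤ n := by
    simpa [p, charpoly_natDegree_eq_dim] using Polynomial.card_roots' p
  calc |A.trace| = ‖Complex.ofRealHom A.trace‖ := by simp
    _ = ‖p.roots.sum‖ := by rw [AddMonoidHom.map_trace, ← trace_eq_sum_roots_charpoly]; rfl
    _ ≤ (p.roots.map (‖·‖)).sum := norm_multiset_sum_le _
    _ ≤ Multiset.card p.roots • specRad A := by
        simpa using Multiset.sum_le_card_nsmul _ _ (Multiset.forall_mem_map_iff.mpr hroots)
    _ ≤ n * specRad A := by
        rw [nsmul_eq_mul]; gcongr; exact specRad_nonneg A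

lemma specRad_add_le_of_commute (h : Commute A B) :
    specRad (A + B) ≤ specRad A + specRad B := by
  refine specRad_le (add_nonneg (specRad_nonneg A) (specRad_nonneg B)) fun μ hμ => ?_
  rw [Matrix.map_add _ Complex.ofReal_add] at hμ
  obtain ⟨a, ha, b, hb, rfl⟩ :=
    Matrix.spectrum_add_subset_of_commute (h.map Complex.ofRealHom.mapMatrix) hμ
  exact (norm_add_le a b).trans (add_le_add (norm_le_specRad ha) (norm_le_specRad hb))

lemma specRad_smul_le [NeZero n] (s : ℝ) (A : Matrix (Fin n) (Fin n) ℝ) :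
    specRad (s • A) ≤ |s| * specRad A := by
  refine specRad_le (mul_nonneg (abs_nonneg s) (specRad_nonneg A)) fun μ hμ => ?_
  rw [Matrix.map_smul' _ _ _ Complex.ofReal_mul, spectrum.smul_eq_smul _ _
    (spectrum.nonempty_of_isAlgClosed_of_finiteDimensional ℂ _)] at hμ
  obtain ⟨ν, hν, rfl⟩ := hμ
  simpa using mul_le_mul_of_nonneg_left (norm_le_specRad hν) (abs_nonneg s)

end SpecRad

section AffinePencil

variable {n : ℕ} {P Q : Matrix (Fin n) (Fin n) ℝ}

theorem convexOn_specRad_add_smul [NeZero n] (h : Commute P Q) :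
    ConvexOn ℝ univ fun β : ℝ => specRad (P + β • Q) := by
  refine ⟨convex_univ, fun x _ y _ a b ha hb hab => ?_⟩
  have hcomm : Commute (P + x • Q) (P + y • Q) :=
    ((Commute.refl P).add_right (h.smul_right y)).add_left
      ((h.symm.add_right ((Commute.refl Q).smul_right y)).smul_left x)
  have hcomb : P + (a • x + b • y) • Q = a • (P + x • Q) + b • (P + y • Q) := by
    obtain rfl : b = 1 - a := by linarith
    module
  calc specRad (P + (a • x + b • y) • Q)
      ≤ specRad (a • (P + x • Q)) + specRad (b • (P + y • Q)) := by
        rw [hcomb]; exact specRad_add_le_of_commute ((hcomm.smul_left a).smul_right b)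
    _ ≤ a * specRad (P + x • Q) + b * specRad (P + y • Q) := by
        gcongr
        · simpa [abs_of_nonneg ha] using specRad_smul_le a (P + x • Q)
        · simpa [abs_of_nonneg hb] using specRad_smul_le b (P + y • Q)

theorem exists_lt_specRad_add_smul (hQ : 0 < Q.trace) (c : ℝ) :
    ∃ β : ℝ, 0 ≤ β ∧ c < specRad (P + β • Q) := by
  have hn : (0 : ℝ) < n := by
    rcases Nat.eq_zero_or_pos n with rfl | hn
    · simp at hQ
    · exact_mod_cast hn
  set β := max 0 ((n * c - P.trace) / Q.trace + 1)
  have hβ : n * c - P.trace < β * Q.trace :=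
    calc n * c - P.trace < ((n * c - P.trace) / Q.trace + 1) * Q.trace := by
          rw [add_mul, div_mul_cancel₀ _ hQ.ne']; linarith
      _ ≤ β * Q.trace := by gcongr; exact le_max_right _ _
  refine ⟨β, le_max_left _ _, lt_of_mul_lt_mul_left ?_ hn.le⟩
  calc n * c < (P + β • Q).trace := by rw [trace_add, trace_smul, smul_eq_mul]; linarith
    _ ≤ |(P + β • Q).trace| := le_abs_self _
    _ ≤ n * specRad (P + β • Q) := abs_trace_le_mul_specRad _

end AffinePencil

section Threshold

variable {f : ℝ → ℝ} {c : ℝ}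

theorem ConvexOn.apply_lt_apply_of_apply_zero_lt (hf : ConvexOn ℝ (Ici 0) f) {x y : ℝ}
    (hx : 0 ≤ x) (hxy : x < y) (h : f 0 < f x) : f x < f y := by
  have hx0 : 0 < x := hx.lt_of_ne (by rintro rfl; exact h.false)
  refine hf.lt_right_of_left_lt self_mem_Ici (hx.trans hxy.le) ?_ h
  rw [openSegment_eq_Ioo (hx0.trans hxy)]
  exact ⟨hx0, hxy⟩

theorem ConvexOn.lt_apply_of_lt_apply (hf : ConvexOn ℝ (Ici 0) f) (h0 : f 0 < c) {x y : ℝ}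
    (hx : 0 ≤ x) (hxy : x < y) (h : c < f x) : c < f y :=
  h.trans (hf.apply_lt_apply_of_apply_zero_lt hx hxy (h0.trans h))

theorem ConvexOn.apply_lt_of_lt_csInf (hf : ConvexOn ℝ (Ici 0) f) (h0 : f 0 < c) {x : ℝ}
    (hx : 0 ≤ x) (hlt : x < sInf {β | 0 ≤ β ∧ c < f β}) : f x < c := by
  set S := {β | 0 ≤ β ∧ c < f β}
  by_contra! h
  have hy : (x + sInf S) / 2 ∈ S := ⟨by linarith,
    h.trans_lt (hf.apply_lt_apply_of_apply_zero_lt hx (by linarith) (h0.trans_le h))⟩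
  have := csInf_le ⟨0, fun _ hb => hb.1⟩ hy
  linarith

theorem ConvexOn.lt_apply_of_csInf_lt (hf : ConvexOn ℝ (Ici 0) f) (h0 : f 0 < c)
    (hne : {β | 0 ≤ β ∧ c < f β}.Nonempty) {x : ℝ} (hlt : sInf {β | 0 ≤ β ∧ c < f β} < x) :
    c < f x := by
  obtain ⟨y, ⟨hy0, hy⟩, hyx⟩ := exists_lt_of_csInf_lt hne hlt
  exact hf.lt_apply_of_lt_apply h0 hy0 hyx hy

end Threshold

section ConsensusProjection

theorem one_sub_mul_mul_one_sub_mul {R : Type*} [Ring R] {J A : R} (B : R)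
    (hA : (1 - J) * A * J = 0) : (1 - J) * A * ((1 - J) * B) = (1 - J) * (A * B) := by
  rw [← mul_assoc, mul_sub, mul_one, hA, sub_zero, mul_assoc]

theorem Commute.one_sub_mul {R : Type*} [Ring R] {J A B : R} (h : Commute A B)
    (hA : (1 - J) * A * J = 0) (hB : (1 - J) * B * J = 0) :
    Commute ((1 - J) * A) ((1 - J) * B) := by
  rw [commute_iff_eq, one_sub_mul_mul_one_sub_mul B hA, one_sub_mul_mul_one_sub_mul A hB, h.eq]

theorem Matrix.isIdempotentElem_inv_smul_of_one {n : ℕ} [NeZero n] :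
    IsIdempotentElem ((n : ℝ)⁻¹ • of fun _ _ : Fin n => (1 : ℝ)) := by
  ext i j
  simp [mul_apply]
  field_simp

theorem Matrix.mul_smul_of_one_eq_zero {ι : Type*} [Fintype ι] {L : Matrix ι ι ℝ}
    (h : L *ᵥ (fun _ => 1) = 0) (c : ℝ) : L * (c • of fun _ _ => (1 : ℝ)) = 0 := by
  ext i j
  simpa [mul_apply, mulVec, dotProduct, ← Finset.sum_mul] using Or.inl (congrFun h i)

theorem Matrix.trace_pos_of_laplacian_ne_zero {ι : Type*} [Fintype ι] {L : Matrix ι ι ℝ}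
    (hrow : L *ᵥ (fun _ => 1) = 0) (hdiag : ∀ i, 0 ≤ L i i) (hoff : ∀ i j, i ≠ j → L i j ≤ 0)
    (hL : L ≠ 0) : 0 < L.trace := by
  refine (Finset.sum_nonneg fun i _ => hdiag i).lt_of_ne fun htr => hL ?_
  have hdiag0 : ∀ i, L i i = 0 := fun i =>
    (Finset.sum_eq_zero_iff_of_nonneg fun i _ => hdiag i).mp htr.symm i (Finset.mem_univ i)
  ext i j
  have hnonpos : ∀ k ∈ Finset.univ, L i k ≤ 0 := fun k _ => by
    rcases eq_or_ne i k with rfl | hik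
    exacts [(hdiag0 i).le, hoff i k hik]
  have hsum : ∑ k, L i k = 0 := by simpa [mulVec, dotProduct] using congrFun hrow i
  exact (Finset.sum_eq_zero_iff_of_nonpos hnonpos).mp hsum j (Finset.mem_univ j)

end ConsensusProjection

theorem stmt15_general {n : ℕ}
    (α : ℝ)
    (Latt Lrep J : Matrix (Fin n) (Fin n) ℝ)
    (hJ : J = (n : ℝ)⁻¹ • Matrix.of (fun _ _ : Fin n => (1 : ℝ)))
    -- Laplacian structure: zero row sums, nonnegative diagonal, nonpositive off-diagonal
    (hattRow : Latt *ᵥ (fun _ => 1) = 0)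
    (hrepRow : Lrep *ᵥ (fun _ => 1) = 0)
    (hrepDiag : ∀ i, 0 ≤ Lrep i i) (hrepOff : ∀ i j, i ≠ j → Lrep i j ≤ 0)
    (hcomm : Latt * Lrep = Lrep * Latt)
    (hrepNe : Lrep ≠ 0)
    (f : ℝ → ℝ)
    (hf : ∀ β, f β = specRad ((1 - J) * (1 - (α / n) • Latt + (β / n) • Lrep)))
    -- `G_att` has a spanning tree, hence convergence without repulsive links:
    (htree : f 0 < 1)
    (βstar : ℝ)
    (hβstar : βstar = sInf {β : ℝ | 0 ≤ β ∧ 1 < f β}) :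
    {β : ℝ | 0 ≤ β ∧ 1 < f β}.Nonempty ∧
    (∀ β₁ β₂, 0 ≤ β₁ → β₁ < β₂ → 1 < f β₁ → 1 < f β₂) ∧
    (∀ β, 0 ≤ β → (β < βstar → f β < 1) ∧ (βstar < β → 1 < f β)) := by
  have : NeZero n := ⟨by rintro rfl; exact hrepNe (Subsingleton.elim _ _)⟩
  have hJJ : IsIdempotentElem J := hJ ▸ isIdempotentElem_inv_smul_of_one
  set W := 1 - (α / n) • Latt
  set L := (n : ℝ)⁻¹ • Lrep
  have hWJ : W * J = J := by
    rw [sub_mul, one_mul, smul_mul_assoc, hJ, mul_smul_of_one_eq_zero hattRow, smul_zero, sub_zero]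
  have hLJ : L * J = 0 := by rw [smul_mul_assoc, hJ, mul_smul_of_one_eq_zero hrepRow, smul_zero]
  have hf_pencil : f = fun β => specRad ((1 - J) * W + β • ((1 - J) * L)) := by
    funext β
    simp only [hf, W, L, mul_add, mul_smul_comm, smul_smul, div_eq_mul_inv]
  have hcommute : Commute ((1 - J) * W) ((1 - J) * L) :=
    (((Commute.one_left Lrep).sub_left (Commute.smul_left hcomm _)).smul_right _).one_sub_mul
      (by rw [mul_assoc, hWJ, hJJ.one_sub_mul_self]) (by rw [mul_assoc, hLJ, mul_zero])
  have htrace : 0 < ((1 - J) * L).trace := by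
    rw [sub_mul, one_mul, trace_sub, trace_mul_comm J, hLJ, trace_zero, sub_zero, trace_smul]
    exact smul_pos (by simpa using NeZero.pos n)
      (trace_pos_of_laplacian_ne_zero hrepRow hrepDiag hrepOff hrepNe)
  have hconv : ConvexOn ℝ (Ici 0) f :=
    hf_pencil ▸ (convexOn_specRad_add_smul hcommute).subset (subset_univ _) (convex_Ici 0)
  have hne : {β | 0 ≤ β ∧ 1 < f β}.Nonempty :=
    hf_pencil ▸ exists_lt_specRad_add_smul htrace 1
  subst hβstar
  exact ⟨hne, fun _ _ h₁ h₁₂ h => hconv.lt_apply_of_lt_apply htree h₁ h₁₂ h,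
    fun _ hβ => ⟨hconv.apply_lt_of_lt_csInf htree hβ, hconv.lt_apply_of_csInf_lt htree hne⟩⟩

/-- Phase transition for convergence in expectation: suppose the weighted Laplacians
`L_att` and `L_rep` commute, `G_att` has a spanning tree (so that
`f(0) = ρ((I − 𝟏𝟏ᵀ/n)(I − (α/n)L_att)) < 1` for the fixed `α ∈ (0,1]`), and `L_rep ≠ 0`.
With `f(β) = ρ((I − 𝟏𝟏ᵀ/n)(I − (α/n)L_att + (β/n)L_rep))`, the set
`{β ≥ 0 : f(β) > 1}` is nonempty and upward closed, hence `β⋆ = inf{β ≥ 0 : f(β) > 1}`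
is finite, and `f(β) < 1` for `0 ≤ β < β⋆` while `f(β) > 1` for `β > β⋆`. -/
theorem stmt15 {n : ℕ} (hn : 3 ≤ n)
    (α : ℝ) (hα : 0 < α ∧ α ≤ 1)
    (Latt Lrep J : Matrix (Fin n) (Fin n) ℝ)
    (hJ : J = (n : ℝ)⁻¹ • Matrix.of (fun _ _ : Fin n => (1 : ℝ)))
    -- Laplacian structure: zero row sums, nonnegative diagonal, nonpositive off-diagonal
    (hattRow : Latt *ᵥ (fun _ => 1) = 0)
    (hrepRow : Lrep *ᵥ (fun _ => 1) = 0)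
    (hattDiag : ∀ i, 0 ≤ Latt i i) (hattOff : ∀ i j, i ≠ j → Latt i j ≤ 0)
    (hrepDiag : ∀ i, 0 ≤ Lrep i i) (hrepOff : ∀ i j, i ≠ j → Lrep i j ≤ 0)
    (hcomm : Latt * Lrep = Lrep * Latt)
    (hrepNe : Lrep ≠ 0)
    (f : ℝ → ℝ)
    (hf : ∀ β, f β = specRad ((1 - J) * (1 - (α / n) • Latt + (β / n) • Lrep)))
    -- `G_att` has a spanning tree, hence convergence without repulsive links:
    (htree : f 0 < 1)
    (βstar : ℝ)
    (hβstar : βstar = sInf {β : ℝ | 0 ≤ β ∧ 1 < f β}) :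
    {β : ℝ | 0 ≤ β ∧ 1 < f β}.Nonempty ∧
    (∀ β₁ β₂, 0 ≤ β₁ → β₁ < β₂ → 1 < f β₁ → 1 < f β₂) ∧
    (∀ β, 0 ≤ β → (β < βstar → f β < 1) ∧ (βstar < β → 1 < f β)) :=
  stmt15_general α Latt Lrep J hJ hattRow hrepRow hrepDiag hrepOff hcomm hrepNe f hf htree βstar
    hβstar
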